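/- arXiv:1705.06730 — 2 statements merged into one kernel-verified Lean document; each statement's English description precedes it below -/
import Mathlib

section
/- Let k ≥ 1 and A ∈ ℝ^{n×m} with m ≥ 2k + 1, and let δ = min_{rank(B) ≤ k} |A − B|_∞ be the optimal rank-k approximation error of A in the entrywise ℓ_∞ norm. Then the number of 2k-element subsets R of the column indices [m] such that at least m/10 of the column indices i ∈ [m] satisfy min_{x ∈ ℝ^{2k}} |A_R x − A_i|_∞ ≤ (k+1) δ is at least (4/9) · C(m, 2k). -/
open Matrix

/-- The `ℓ_∞` norm of a vector in `ℝ^n`. -/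
noncomputable def vecSupNorm {n : ℕ} (v : Fin n → ℝ) : ℝ :=
  ⨆ j, |v j|

/-- The entrywise `ℓ_∞` norm of a matrix `M ∈ ℝ^{n×m}`. -/
noncomputable def matSupNorm {n m : ℕ} (M : Matrix (Fin n) (Fin m) ℝ) : ℝ :=
  ⨆ i, ⨆ j, |M i j|

/-!
Fix `2k + 1` columns `S`. At most `k` of them can fail to be fit within `(k + 1)δ` by the other
`2k`: otherwise take `k + 1` failing columns and a rank-`k` matrix `B` with `|A - B|_∞` close
to `δ`. These columns of `B` are linearly dependent, and dividing a dependency by its largest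
coefficient writes one of them as a combination of the others with coefficients in `[-1, 1]`;
the same combination fits the column of `A` within `(k + 1)|A - B|_∞`.

Double counting the pairs `(R, i)` with `i ∉ R` and `R ∪ {i}` of size `2k + 1`, a `2k`-subset
`R` fits on average at least half of the `m - 2k` columns outside it, and a reverse Markov
inequality turns this into at least `4/9` of the subsets fitting `m/10` columns.
-/

open Finset Filter Topology

lemma vecSupNorm_nonneg {n : ℕ} (v : Fin n → ℝ) : 0 ≤ vecSupNorm v :=
  Real.iSup_nonneg fun _ => abs_nonneg _

lemma vecSupNorm_le {n : ℕ} {v : Fin n → ℝ} {a : ℝ} (ha : 0 ≤ a) (h : ∀ j, |v j| ≤ a) :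
    vecSupNorm v ≤ a :=
  Real.iSup_le h ha

lemma matSupNorm_nonneg {n m : ℕ} (M : Matrix (Fin n) (Fin m) ℝ) : 0 ≤ matSupNorm M :=
  Real.iSup_nonneg fun _ => Real.iSup_nonneg fun _ => abs_nonneg _

lemma abs_le_matSupNorm {n m : ℕ} (M : Matrix (Fin n) (Fin m) ℝ) (i : Fin n) (j : Fin m) :
    |M i j| ≤ matSupNorm M :=
  (le_ciSup (Set.finite_range _).bddAbove j).trans
    (le_ciSup (f := fun i => ⨆ j, |M i j|) (Set.finite_range _).bddAbove i)

/-- The error `min_x |A_R x - A_i|_∞` of fitting column `i` by the columns indexed by `R`. -/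
noncomputable def columnFitError {n m : ℕ} (A : Matrix (Fin n) (Fin m) ℝ) (R : Finset (Fin m))
    (i : Fin m) : ℝ :=
  sInf {c : ℝ | ∃ x : Fin m → ℝ, c = vecSupNorm (fun r => (∑ j ∈ R, x j * A r j) - A r i)}

section columnFitError

variable {n m : ℕ} (A : Matrix (Fin n) (Fin m) ℝ)

lemma bddBelow_columnFitErrors (R : Finset (Fin m)) (i : Fin m) :
    BddBelow {c : ℝ | ∃ x : Fin m → ℝ, c = vecSupNorm (fun r => (∑ j ∈ R, x j * A r j) - A r i)} :=
  ⟨0, by rintro _ ⟨x, rfl⟩; exact vecSupNorm_nonneg _⟩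

lemma columnFitError_le {R : Finset (Fin m)} {i : Fin m} {t : ℝ} (ht : 0 ≤ t) (x : Fin m → ℝ)
    (h : ∀ r, |(∑ j ∈ R, x j * A r j) - A r i| ≤ t) : columnFitError A R i ≤ t :=
  (csInf_le (bddBelow_columnFitErrors A R i) ⟨x, rfl⟩).trans (vecSupNorm_le ht h)

lemma columnFitError_nonpos_of_mem {R : Finset (Fin m)} {i : Fin m} (hi : i ∈ R) :
    columnFitError A R i ≤ 0 :=
  columnFitError_le A le_rfl (Pi.single i 1) fun r => by
    simp [Pi.single_apply, ite_mul, hi]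

lemma columnFitError_anti {R R' : Finset (Fin m)} (h : R ⊆ R') (i : Fin m) :
    columnFitError A R' i ≤ columnFitError A R i := by
  refine le_csInf ⟨_, 0, rfl⟩ ?_
  rintro _ ⟨x, rfl⟩
  refine csInf_le (bddBelow_columnFitErrors A R' i) ⟨fun j => if j ∈ R then x j else 0, ?_⟩
  simp [ite_mul, Finset.sum_ite_mem, Finset.inter_eq_right.mpr h]

end columnFitError

section LinearDependence

variable {𝕜 E ι : Type*} [Field 𝕜] [LinearOrder 𝕜] [IsStrictOrderedRing 𝕜] [AddCommGroup E]
  [Module 𝕜 E] [DecidableEq ι]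

lemma exists_eq_sum_smul_of_not_linearIndepOn {v : ι → E} {s : Finset ι}
    (h : ¬ LinearIndepOn 𝕜 v s) :
    ∃ i ∈ s, ∃ x : ι → 𝕜, (∀ j ∈ s, |x j| ≤ 1) ∧ v i = ∑ j ∈ s.erase i, x j • v j := by
  obtain ⟨g, hg, j₀, hj₀, hgj₀⟩ := not_linearIndepOn_finset_iff.mp h
  obtain ⟨i, hi, hmax⟩ := s.exists_max_image (fun j => |g j|) ⟨j₀, hj₀⟩
  have hgi : g i ≠ 0 := abs_pos.mp ((abs_pos.mpr hgj₀).trans_le (hmax j₀ hj₀))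
  refine ⟨i, hi, fun j => -(g i)⁻¹ * g j, fun j hj => ?_, ?_⟩
  · rw [abs_mul, abs_neg, abs_inv, inv_mul_le_one₀ (abs_pos.mpr hgi)]
    exact hmax j hj
  · have hrest : ∑ j ∈ s.erase i, g j • v j = -(g i • v i) := by
      rw [← add_sum_erase s _ hi] at hg
      exact eq_neg_of_add_eq_zero_right hg
    simp_rw [mul_smul, ← smul_sum, hrest, smul_neg, neg_smul, neg_neg, smul_smul,
      inv_mul_cancel₀ hgi, one_smul]

end LinearDependence

lemma Matrix.card_le_rank_of_linearIndepOn_col {l o R : Type*} [Fintype o] [Field R]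
    {B : Matrix l o R} {T : Finset o} (h : LinearIndepOn R B.col T) : #T ≤ B.rank := by
  have hT :
      Module.finrank R (Submodule.span R (Set.range fun j : (T : Set o) => B.col j)) = #T := by
    simpa using finrank_span_eq_card h
  have := FiniteDimensional.span_of_finite R (Set.finite_range B.col)
  rw [B.rank_eq_finrank_span_cols, ← hT]
  exact Submodule.finrank_mono (Submodule.span_mono (Set.range_comp_subset_range _ _))

section LowRankFit

variable {n m k : ℕ} (A : Matrix (Fin n) (Fin m) ℝ)

lemma abs_sum_mul_sub_le_matSupNorm (E : Matrix (Fin n) (Fin m) ℝ) {s : Finset (Fin m)}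
    {x : Fin m → ℝ} (hx : ∀ j ∈ s, |x j| ≤ 1) (r : Fin n) (i : Fin m) :
    |(∑ j ∈ s, x j * E r j) - E r i| ≤ (#s + 1) * matSupNorm E :=
  calc |(∑ j ∈ s, x j * E r j) - E r i|
      ≤ ∑ j ∈ s, |x j * E r j| + |E r i| :=
        (abs_sub _ _).trans (add_le_add_left (abs_sum_le_sum_abs _ _) _)
    _ ≤ ∑ j ∈ s, matSupNorm E + matSupNorm E := by
        gcongr with j hj
        · rw [abs_mul]
          exact (mul_le_mul (hx j hj) (abs_le_matSupNorm E r j) (abs_nonneg _)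
            zero_le_one).trans_eq (one_mul _)
        · exact abs_le_matSupNorm E r i
    _ = (#s + 1) * matSupNorm E := by rw [sum_const, nsmul_eq_mul]; ring

lemma exists_columnFitError_erase_le {B : Matrix (Fin n) (Fin m) ℝ} (hB : B.rank ≤ k)
    {T : Finset (Fin m)} (hT : #T = k + 1) :
    ∃ i ∈ T, columnFitError A (T.erase i) i ≤ (k + 1) * matSupNorm (A - B) := by
  have hdep : ¬ LinearIndepOn ℝ B.col T := fun h => by
    have := B.card_le_rank_of_linearIndepOn_col h
    omega
  obtain ⟨i, hi, x, hx, hBi⟩ := exists_eq_sum_smul_of_not_linearIndepOn hdep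
  refine ⟨i, hi, columnFitError_le A (mul_nonneg (by positivity) (matSupNorm_nonneg _)) x
    fun r => ?_⟩
  -- `x` fits column `i` of `B` exactly, so its residual on `A` is its residual on `A - B`
  have hBr : B r i = ∑ j ∈ T.erase i, x j * B r j := by simpa using congrFun hBi r
  have hres : (∑ j ∈ T.erase i, x j * A r j) - A r i =
      (∑ j ∈ T.erase i, x j * (A - B) r j) - (A - B) r i := by
    simp only [Matrix.sub_apply, mul_sub, sum_sub_distrib, hBr]
    ring
  have := abs_sum_mul_sub_le_matSupNorm (A - B) (s := T.erase i)
    (fun j hj => hx j (mem_of_mem_erase hj)) r i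
  rwa [← hres, card_erase_of_mem hi, hT, Nat.add_sub_cancel] at this

lemma card_filter_lt_columnFitError_erase_le {B : Matrix (Fin n) (Fin m) ℝ} (hB : B.rank ≤ k)
    (S : Finset (Fin m)) :
    #{i ∈ S | (k + 1) * matSupNorm (A - B) < columnFitError A (S.erase i) i} ≤ k := by
  by_contra! hlt
  obtain ⟨T, hTS, hT⟩ := exists_subset_card_eq (Nat.succ_le_of_lt hlt)
  obtain ⟨i, hi, hfit⟩ := exists_columnFitError_erase_le A hB hT
  have hbad := (mem_filter.mp (hTS hi)).2
  have hanti := columnFitError_anti A (erase_subset_erase i (hTS.trans (filter_subset _ _))) i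
  linarith

end LowRankFit

lemma Finset.eventually_filter_lt_subset {ι : Type*} (S : Finset ι) (f : ι → ℝ) {g : ℝ → ℝ}
    {δ : ℝ} (hg : ContinuousAt g δ) :
    ∀ᶠ η in 𝓝 δ, {i ∈ S | g δ < f i} ⊆ {i ∈ S | g η < f i} := by
  have hlt : ∀ i ∈ S, ∀ᶠ η in 𝓝 δ, g δ < f i → g η < f i := fun i _ => by
    by_cases h : g δ < f i
    · exact (hg.eventually_lt continuousAt_const h).mono fun _ hη _ => hη
    · exact Eventually.of_forall fun _ h' => absurd h' h
  filter_upwards [(eventually_all_finset S).2 hlt] with η hη i hi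
  simp only [mem_filter] at hi ⊢
  exact ⟨hi.1, hη i hi.1 hi.2⟩

lemma card_filter_lt_columnFitError_erase_le_of_eq_sInf {n m k : ℕ}
    (A : Matrix (Fin n) (Fin m) ℝ) {δ : ℝ}
    (hδ : δ = sInf {c : ℝ | ∃ B : Matrix (Fin n) (Fin m) ℝ, B.rank ≤ k ∧
      c = matSupNorm (A - B)}) (S : Finset (Fin m)) :
    #{i ∈ S | (k + 1) * δ < columnFitError A (S.erase i) i} ≤ k := by
  -- the infimum need not be attained; a near-optimal `B` has a bad set at least as large
  set errors := {c : ℝ | ∃ B : Matrix (Fin n) (Fin m) ℝ, B.rank ≤ k ∧ c = matSupNorm (A - B)}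
  have hne : errors.Nonempty := ⟨_, 0, by simp, rfl⟩
  have hglb : IsGLB errors δ :=
    hδ ▸ isGLB_csInf hne ⟨0, by rintro _ ⟨B, -, rfl⟩; exact matSupNorm_nonneg _⟩
  obtain ⟨η, hsub, B, hB, rfl⟩ :=
    ((S.eventually_filter_lt_subset (fun i => columnFitError A (S.erase i) i)
      (g := fun η => ((k : ℝ) + 1) * η) (by fun_prop)).and_frequently
      (hglb.frequently_nhds_mem hne)).exists
  exact (card_le_card hsub).trans (card_filter_lt_columnFitError_erase_le A hB S)

lemma sub_mul_card_le_mul_card_filter {β : Type*} {s : Finset β} {f : β → ℝ} {p : β → Prop}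
    [DecidablePred p] {d a θ : ℝ} (hd : 0 < d) (hle : ∀ x ∈ s, f x ≤ d)
    (hsmall : ∀ x ∈ s, ¬ p x → f x ≤ θ * d) (hsum : a * #s * d ≤ ∑ x ∈ s, f x) :
    (a - θ) * #s ≤ (1 - θ) * #{x ∈ s | p x} := by
  have hsplit : ∑ x ∈ s, f x ≤ #{x ∈ s | p x} * d + #{x ∈ s | ¬ p x} * (θ * d) := by
    rw [← sum_filter_add_sum_filter_not s p]
    gcongr ?_ + ?_
    · simpa using sum_le_card_nsmul _ f d fun x hx => hle x (mem_filter.mp hx).1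
    · simpa using sum_le_card_nsmul _ f (θ * d) fun x hx =>
        hsmall x (mem_filter.mp hx).1 (mem_filter.mp hx).2
  have hcard : (#{x ∈ s | ¬ p x} : ℝ) = #s - #{x ∈ s | p x} := by
    rw [eq_sub_iff_add_eq, add_comm]
    exact_mod_cast card_filter_add_card_filter_not p
  rw [hcard] at hsplit
  refine le_of_mul_le_mul_right ?_ hd
  linarith

section Counting

variable {α : Type*} [Fintype α] [DecidableEq α]

lemma sum_card_filter_erase_eq_sum_card_filter_compl (r : ℕ) (p : Finset α → α → Prop)
    [∀ R, DecidablePred (p R)] :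
    ∑ S ∈ powersetCard (r + 1) univ, #{i ∈ S | p (S.erase i) i} =
      ∑ R ∈ powersetCard r univ, #{i ∈ Rᶜ | p R i} := by
  simp only [← card_sigma]
  refine card_bij' (fun x _ => ⟨x.1.erase x.2, x.2⟩) (fun y _ => ⟨insert y.2 y.1, y.2⟩)
    ?_ ?_ ?_ ?_
  · rintro ⟨S, i⟩ hx
    simp only [mem_sigma, mem_powersetCard_univ, mem_filter] at hx ⊢
    simp [card_erase_of_mem hx.2.1, hx]
  · rintro ⟨R, i⟩ hx
    simp only [mem_sigma, mem_powersetCard_univ, mem_filter, mem_compl] at hx ⊢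
    simp [card_insert_of_notMem hx.2.1, hx]
  · rintro ⟨S, i⟩ hx
    simp [insert_erase (mem_filter.mp (mem_sigma.mp hx).2).1]
  · rintro ⟨R, i⟩ hx
    simp [erase_insert (mem_compl.mp (mem_filter.mp (mem_sigma.mp hx).2).1)]

lemma card_filter_compl_add_card_le {R : Finset α} {p : α → Prop} [DecidablePred p]
    (h : ∀ i ∈ R, p i) : #{i ∈ Rᶜ | p i} + #R ≤ #{i | p i} := by
  rw [← card_union_of_disjoint (disjoint_compl_left.mono_left (filter_subset _ _))]
  exact card_le_card (union_subset (filter_subset_filter _ (subset_univ _))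
    fun i hi => mem_filter.mpr ⟨mem_univ _, h i hi⟩)

theorem four_ninths_mul_choose_le_card_filter {r : ℕ} (hr : r < Fintype.card α)
    (good : Finset α → α → Prop) [∀ R, DecidablePred (good R)] (hmem : ∀ R, ∀ i ∈ R, good R i)
    (hhalf : ∀ S : Finset α, #S = r + 1 → r + 1 ≤ 2 * #{i ∈ S | good (S.erase i) i}) :
    (4 / 9 : ℝ) * (Fintype.card α).choose r ≤
      #{R ∈ powersetCard r univ | (Fintype.card α : ℝ) / 10 ≤ #{i | good R i}} := by
  set m := Fintype.card α
  set f : Finset α → ℝ := fun R => #{i ∈ Rᶜ | good R i}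
  have hd : (0 : ℝ) < m - r := sub_pos.mpr (by exact_mod_cast hr)
  have hchoose : (m.choose (r + 1) : ℝ) * (r + 1) = m.choose r * (m - r) := by
    rw [← Nat.cast_sub hr.le]
    exact_mod_cast Nat.choose_succ_right_eq m r
  have hle : ∀ R ∈ powersetCard r univ, f R ≤ m - r := fun R hR => by
    have h := (card_filter_le Rᶜ (good R)).trans_eq (card_compl R)
    rw [mem_powersetCard_univ.mp hR] at h
    simp only [f]
    rw [← Nat.cast_sub hr.le]
    exact_mod_cast h
  have hsmall : ∀ R ∈ powersetCard r univ, ¬ (m : ℝ) / 10 ≤ #{i | good R i} →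
      f R ≤ 1 / 10 * (m - r) := fun R hR hR' => by
    have h := card_filter_compl_add_card_le (hmem R)
    rw [mem_powersetCard_univ.mp hR] at h
    have h' : f R + r ≤ #{i | good R i} := by simp only [f]; exact_mod_cast h
    have hr0 : (0 : ℝ) ≤ r := r.cast_nonneg
    linarith [not_le.mp hR']
  have hsum : 1 / 2 * #(powersetCard r (univ : Finset α)) * (m - r) ≤
      ∑ R ∈ powersetCard r univ, f R :=
    calc 1 / 2 * #(powersetCard r (univ : Finset α)) * (m - r)
        = ∑ _S ∈ powersetCard (r + 1) (univ : Finset α), ((r + 1) / 2 : ℝ) := by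
          rw [sum_const, nsmul_eq_mul, card_powersetCard, card_powersetCard, card_univ]
          linarith
      _ ≤ ∑ S ∈ powersetCard (r + 1) univ, (#{i ∈ S | good (S.erase i) i} : ℝ) :=
          sum_le_sum fun S hS => by
            have h : ((r : ℝ) + 1) ≤ 2 * #{i ∈ S | good (S.erase i) i} := by
              exact_mod_cast hhalf S (mem_powersetCard_univ.mp hS)
            linarith
      _ = ∑ R ∈ powersetCard r univ, f R := by
          simp only [f]
          exact_mod_cast sum_card_filter_erase_eq_sum_card_filter_compl r good
  have := sub_mul_card_le_mul_card_filter hd hle hsmall hsum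
  rw [card_powersetCard, card_univ] at this
  linarith

end Counting

open scoped Classical in
theorem random_column_subsets_cover_linf_general
    {n m k : ℕ} (hm : 2 * k + 1 ≤ m)
    (A : Matrix (Fin n) (Fin m) ℝ) (δ : ℝ)
    (hδ : δ = sInf {c : ℝ | ∃ B : Matrix (Fin n) (Fin m) ℝ, B.rank ≤ k ∧
      c = matSupNorm (A - B)}) :
    (4 / 9 : ℝ) * (Nat.choose m (2 * k) : ℝ) ≤
      (((Finset.powersetCard (2 * k) (Finset.univ : Finset (Fin m))).filter
        (fun R => (m : ℝ) / 10 ≤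
          (((Finset.univ : Finset (Fin m)).filter (fun i =>
            sInf {c : ℝ | ∃ x : Fin m → ℝ,
                c = vecSupNorm (fun r => (∑ j ∈ R, x j * A r j) - A r i)}
              ≤ ((k : ℝ) + 1) * δ)).card : ℝ))).card : ℝ) := by
  have hδ0 : 0 ≤ δ :=
    hδ ▸ Real.sInf_nonneg (by rintro _ ⟨B, -, rfl⟩; exact matSupNorm_nonneg _)
  have hhalf (S : Finset (Fin m)) (hS : #S = 2 * k + 1) :
      2 * k + 1 ≤ 2 * #{i ∈ S | columnFitError A (S.erase i) i ≤ (k + 1) * δ} := by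
    have hbad := card_filter_lt_columnFitError_erase_le_of_eq_sInf A hδ S
    have hsplit := card_filter_add_card_filter_not (s := S)
      (fun i => columnFitError A (S.erase i) i ≤ (k + 1) * δ)
    simp only [not_le] at hsplit
    omega
  have key := four_ninths_mul_choose_le_card_filter (α := Fin m) (r := 2 * k) (by simpa using hm)
    (fun R i => columnFitError A R i ≤ (k + 1) * δ)
    (fun R i hi => (columnFitError_nonpos_of_mem A hi).trans (by positivity)) hhalf
  rw [Fintype.card_fin] at key
  exact key

open scoped Classical in
/-- Let `k ≥ 1`, `A ∈ ℝ^{n×m}` with `m ≥ 2k+1`, and let `δ` be the optimal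
rank-`k` approximation error of `A` in the entrywise `ℓ_∞` norm. Then the number of
`2k`-element subsets `R` of the column indices with at least `m/10` indices `i` satisfying
`min_x |A_R x - A_i|_∞ ≤ (k+1)δ` is at least `(4/9)·C(m, 2k)`. -/
theorem random_column_subsets_cover_linf
    {n m k : ℕ} (hk : 1 ≤ k) (hm : 2 * k + 1 ≤ m)
    (A : Matrix (Fin n) (Fin m) ℝ) (δ : ℝ)
    (hδ : δ = sInf {c : ℝ | ∃ B : Matrix (Fin n) (Fin m) ℝ, B.rank ≤ k ∧
      c = matSupNorm (A - B)}) :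
    (4 / 9 : ℝ) * (Nat.choose m (2 * k) : ℝ) ≤
      (((Finset.powersetCard (2 * k) (Finset.univ : Finset (Fin m))).filter
        (fun R => (m : ℝ) / 10 ≤
          (((Finset.univ : Finset (Fin m)).filter (fun i =>
            sInf {c : ℝ | ∃ x : Fin m → ℝ,
                c = vecSupNorm (fun r => (∑ j ∈ R, x j * A r j) - A r i)}
              ≤ ((k : ℝ) + 1) * δ)).card : ℝ))).card : ℝ) :=
  random_column_subsets_cover_linf_general hm A δ hδ
end

section
/- Let k ≥ 1 and p ∈ (2, ∞). There exists a matrix A (namely A = (k+1)·I_{k+1} ∈ ℝ^{(k+1)×(k+1)}) such that the minimum over all sets S of k column indices and all X ∈ ℝ^{k×(k+1)} of |A − A_S X|_p is at least (k+1)^{1 − 2/p} times the minimum of |A − B|_p over all matrices B of rank at most k. Consequently, the column subset selection problem for the entrywise ℓ_p norm admits no approximation factor better than (k+1)^{1−2/p} = k^{Ω(1)}. -/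
open Matrix

/-- The entrywise `ℓ_p` norm of a matrix, for real `p`. -/
noncomputable def matLpNorm {n m : ℕ} (p : ℝ) (M : Matrix (Fin n) (Fin m) ℝ) : ℝ :=
  (∑ i, ∑ j, |M i j| ^ p) ^ (1 / p)

lemma matLpNorm_nonneg {n m : ℕ} (p : ℝ) (M : Matrix (Fin n) (Fin m) ℝ) :
    0 ≤ matLpNorm p M := by
  apply Real.rpow_nonneg
  apply Finset.sum_nonneg
  intro i _
  apply Finset.sum_nonneg
  intro j _
  exact Real.rpow_nonneg (abs_nonneg _) _

/-- Let `k ≥ 1` and `p ∈ (2, ∞)`. There exists a matrix `A` (namely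
`A = (k+1)·I_{k+1}`) such that for every set `S` of `k` column indices and every
`X ∈ ℝ^{k×(k+1)}`, the cost `|A - A_S X|_p` is at least `(k+1)^{1-2/p}` times the minimum of
`|A - B|_p` over all matrices `B` of rank at most `k`; hence `ℓ_p` column subset selection
admits no approximation factor better than `(k+1)^{1-2/p} = k^{Ω(1)}`. -/
theorem css_lp_lower_bound
    {k : ℕ} (hk : 1 ≤ k) (p : ℝ) (hp : 2 < p) :
    ∃ A : Matrix (Fin (k + 1)) (Fin (k + 1)) ℝ,
      A = ((k : ℝ) + 1) • (1 : Matrix (Fin (k + 1)) (Fin (k + 1)) ℝ) ∧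
      ∀ S : Fin k → Fin (k + 1), Function.Injective S →
        ∀ X : Matrix (Fin k) (Fin (k + 1)) ℝ,
          ((k : ℝ) + 1) ^ (1 - 2 / p) *
              sInf {c : ℝ | ∃ B : Matrix (Fin (k + 1)) (Fin (k + 1)) ℝ, B.rank ≤ k ∧
                c = matLpNorm p (A - B)}
            ≤ matLpNorm p (A - A.submatrix id S * X) := by
  have hp0 : (0:ℝ) < p := by linarith
  have hK : (0:ℝ) < (k:ℝ) + 1 := by positivity
  set A : Matrix (Fin (k + 1)) (Fin (k + 1)) ℝ :=
    ((k : ℝ) + 1) • (1 : Matrix (Fin (k + 1)) (Fin (k + 1)) ℝ) with hA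
  refine ⟨A, rfl, ?_⟩
  intro S hS X
  -- The candidate B = A - J, J the all-ones matrix
  set J : Matrix (Fin (k + 1)) (Fin (k + 1)) ℝ := Matrix.of (fun _ _ => (1:ℝ)) with hJ
  have hrank : (A - J).rank ≤ k := by
    have hker : (fun _ => (1:ℝ)) ∈ LinearMap.ker (A - J).mulVecLin := by
      rw [LinearMap.mem_ker]
      funext i
      simp only [mulVecLin_apply, mulVec, dotProduct]
      simp [hA, hJ, Matrix.sub_apply, Matrix.smul_apply, Matrix.one_apply, mul_ite,
        Finset.sum_sub_distrib, Finset.sum_ite_eq, Pi.zero_apply]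
    have hne : (fun _ => (1:ℝ)) ≠ (0 : Fin (k+1) → ℝ) := by
      intro h
      have := congrFun h 0
      simp at this
    have hkerpos : 0 < Module.finrank ℝ (LinearMap.ker (A - J).mulVecLin) := by
      rw [Module.finrank_pos_iff]
      exact ⟨⟨⟨_, hker⟩, 0, by simpa using hne⟩⟩
    have hsum := LinearMap.finrank_range_add_finrank_ker (A - J).mulVecLin
    rw [Module.finrank_pi] at hsum
    simp only [Fintype.card_fin] at hsum
    have : (A - J).rank = Module.finrank ℝ (LinearMap.range (A - J).mulVecLin) := rfl
    omega
  -- value of matLpNorm p (A - (A - J)) = matLpNorm p J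
  have hnorm : matLpNorm p (A - (A - J)) = ((k:ℝ) + 1) ^ (2 / p) := by
    have : A - (A - J) = J := sub_sub_cancel A J
    rw [this]
    unfold matLpNorm
    have h1 : ∀ i j : Fin (k+1), |J i j| ^ p = 1 := by
      intro i j
      simp [hJ, Real.one_rpow]
    simp only [h1, Finset.sum_const, Finset.card_univ, Fintype.card_fin, nsmul_eq_mul,
      mul_one]
    have : ((k+1 : ℕ) : ℝ) * ((k+1 : ℕ) : ℝ) = ((k:ℝ) + 1) ^ (2:ℝ) := by
      rw [show ((k+1:ℕ):ℝ) = (k:ℝ) + 1 by push_cast; ring]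
      rw [show (2:ℝ) = ((2:ℕ):ℝ) by norm_num, Real.rpow_natCast]
      ring
    rw [this, ← Real.rpow_mul (le_of_lt hK)]
    congr 1
    field_simp
  -- sInf is at most (k+1)^{2/p}
  have hmem : ((k:ℝ) + 1) ^ (2 / p) ∈
      {c : ℝ | ∃ B : Matrix (Fin (k + 1)) (Fin (k + 1)) ℝ, B.rank ≤ k ∧
        c = matLpNorm p (A - B)} := ⟨A - J, hrank, hnorm.symm⟩
  have hbdd : BddBelow {c : ℝ | ∃ B : Matrix (Fin (k + 1)) (Fin (k + 1)) ℝ, B.rank ≤ k ∧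
        c = matLpNorm p (A - B)} := by
    refine ⟨0, ?_⟩
    rintro c ⟨B, -, rfl⟩
    exact matLpNorm_nonneg p _
  have hInf : sInf {c : ℝ | ∃ B : Matrix (Fin (k + 1)) (Fin (k + 1)) ℝ, B.rank ≤ k ∧
        c = matLpNorm p (A - B)} ≤ ((k:ℝ) + 1) ^ (2 / p) := csInf_le hbdd hmem
  -- the RHS is at least k+1
  obtain ⟨j0, hj0⟩ : ∃ j0 : Fin (k+1), ∀ i, S i ≠ j0 := by
    by_contra h
    push_neg at h
    have hsurj : Function.Surjective S := fun j => h j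
    have := Fintype.card_le_of_surjective S hsurj
    simp at this
  have hentry : (A - A.submatrix id S * X) j0 j0 = (k:ℝ) + 1 := by
    simp only [Matrix.sub_apply, Matrix.mul_apply, Matrix.submatrix_apply, id_eq]
    have h1 : A j0 j0 = (k:ℝ) + 1 := by simp [hA, Matrix.one_apply]
    have h2 : ∀ i : Fin k, A j0 (S i) = 0 := by
      intro i
      simp [hA, Matrix.one_apply, Ne.symm (hj0 i)]
    rw [h1]
    rw [Finset.sum_eq_zero (fun i _ => by rw [h2 i, zero_mul])]
    ring
  have hRHS : (k:ℝ) + 1 ≤ matLpNorm p (A - A.submatrix id S * X) := by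
    unfold matLpNorm
    have hterm : ((k:ℝ) + 1) ^ p ≤
        ∑ i, ∑ j, |(A - A.submatrix id S * X) i j| ^ p := by
      have h1 : ((k:ℝ) + 1) ^ p = |(A - A.submatrix id S * X) j0 j0| ^ p := by
        rw [hentry, abs_of_pos hK]
      rw [h1]
      calc |(A - A.submatrix id S * X) j0 j0| ^ p
          ≤ ∑ j, |(A - A.submatrix id S * X) j0 j| ^ p := by
            apply Finset.single_le_sum (f := fun j => |(A - A.submatrix id S * X) j0 j| ^ p)
              (fun j _ => Real.rpow_nonneg (abs_nonneg _) _) (Finset.mem_univ j0)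
        _ ≤ ∑ i, ∑ j, |(A - A.submatrix id S * X) i j| ^ p := by
            apply Finset.single_le_sum
              (f := fun i => ∑ j, |(A - A.submatrix id S * X) i j| ^ p)
              (fun i _ => Finset.sum_nonneg fun j _ => Real.rpow_nonneg (abs_nonneg _) _)
              (Finset.mem_univ j0)
    calc (k:ℝ) + 1 = (((k:ℝ) + 1) ^ p) ^ (1/p) := by
          rw [← Real.rpow_mul (le_of_lt hK), mul_one_div, div_self (ne_of_gt hp0),
            Real.rpow_one]
      _ ≤ _ := Real.rpow_le_rpow (Real.rpow_nonneg (le_of_lt hK) _) hterm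
            (le_of_lt (by positivity))
  calc ((k:ℝ) + 1) ^ (1 - 2 / p) * sInf _
      ≤ ((k:ℝ) + 1) ^ (1 - 2 / p) * (((k:ℝ) + 1) ^ (2 / p)) := by
        apply mul_le_mul_of_nonneg_left hInf (Real.rpow_nonneg (le_of_lt hK) _)
    _ = (k:ℝ) + 1 := by
        rw [← Real.rpow_add hK]
        simp
    _ ≤ _ := hRHS
end
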